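/- Let 𝒜 be a finite alphabet, let p > 1 be a real number, and let v be a nonempty word over 𝒜 such that the prefix of v of length |v|−1 is p-power-free. If v has a suffix w that is a p-power of period ℓ (an integer ℓ ≥ 1), then |w| = ⌈pℓ⌉. -/

import Mathlib

/-- `w` is a `p`-power of period `ℓ`: `w = u^⌊p⌋ · x` with `|u| = ℓ`, `x` a
prefix of `u`, and `|w| ≥ p·|u|`. -/
def IsPPowerPeriod {A : Type*} (p : ℝ) (ℓ : ℕ) (w : List A) : Prop :=
  w ≠ [] ∧ ∃ u x : List A, u.length = ℓ ∧ x <+: u ∧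
    w = (List.replicate ⌊p⌋₊ u).flatten ++ x ∧ p * u.length ≤ w.length

/-- `w` is a `p`-power (of some period). -/
def IsPPower {A : Type*} (p : ℝ) (w : List A) : Prop :=
  ∃ ℓ : ℕ, IsPPowerPeriod p ℓ w

/-- `w` is `p`-power-free: no factor of `w` is a `p`-power. -/
def PFree {A : Type*} (p : ℝ) (w : List A) : Prop :=
  ∀ f : List A, f <:+: w → ¬ IsPPower p f

/-- Let `v` be a nonempty word whose prefix of length `|v|−1` is `p`-power-free.
If `v` has a suffix `w` that is a `p`-power of period `ℓ ≥ 1`, then `|w| = ⌈pℓ⌉`. -/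
theorem stmt19 {A : Type*} [Fintype A] (p : ℝ) (hp : 1 < p)
    (v : List A) (hv : v ≠ [])
    (hpref : PFree p (v.take (v.length - 1)))
    (w : List A) (hw : w <:+ v) (ℓ : ℕ) (hℓ : 1 ≤ ℓ)
    (hpow : IsPPowerPeriod p ℓ w) :
    w.length = ⌈p * (ℓ : ℝ)⌉₊ := by
  obtain ⟨hne, u, x, hu, hx, hweq, hlen⟩ := hpow
  rw [hu] at hlen
  have hge : ⌈p * (ℓ : ℝ)⌉₊ ≤ w.length := Nat.ceil_le.mpr hlen
  rcases eq_or_ne x [] with hxnil | hxne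
  · -- w = replicate ⌊p⌋ u, so |w| = ⌊p⌋ℓ ≤ pℓ ≤ |w|
    have hwlen : w.length = ⌊p⌋₊ * ℓ := by
      subst hweq hxnil; simp [List.length_flatten, hu, List.sum_replicate, smul_eq_mul]
    have h1 : (w.length : ℝ) ≤ p * ℓ := by
      rw [hwlen]
      push_cast
      exact mul_le_mul_of_nonneg_right (Nat.floor_le (le_of_lt (lt_trans one_pos hp)))
        (by positivity)
    have : (w.length : ℝ) = p * ℓ := le_antisymm h1 hlen
    rw [← this, Nat.ceil_natCast]
  · -- x ≠ []: then w.dropLast is still a p-power of period ℓ unless |w| = ⌈pℓ⌉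
    refine le_antisymm ?_ hge
    by_contra h
    push_neg at h
    have hle' : p * (ℓ : ℝ) ≤ (w.length - 1 : ℕ) := by
      have h1 : ⌈p * (ℓ : ℝ)⌉₊ ≤ w.length - 1 := by omega
      calc p * (ℓ : ℝ) ≤ (⌈p * (ℓ : ℝ)⌉₊ : ℝ) := Nat.le_ceil _
        _ ≤ ((w.length - 1 : ℕ) : ℝ) := by exact_mod_cast h1
    have hwd : w.dropLast = (List.replicate ⌊p⌋₊ u).flatten ++ x.dropLast := by
      rw [hweq, List.dropLast_append_of_ne_nil hxne]
    have hdne : w.dropLast ≠ [] := by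
      have : 1 ≤ w.dropLast.length := by
        rw [List.length_dropLast]
        have hℓpos : (1 : ℝ) ≤ p * ℓ := by
          calc (1 : ℝ) ≤ (ℓ : ℝ) := by exact_mod_cast hℓ
            _ = 1 * ℓ := (one_mul _).symm
            _ ≤ p * ℓ := mul_le_mul_of_nonneg_right hp.le (by positivity)
        have := hℓpos.trans hle'
        exact_mod_cast this
      intro hc; rw [hc] at this; simp at this
    have hinf : w.dropLast <:+: v.take (v.length - 1) := by
      obtain ⟨a, ha⟩ := hw
      have : v.take (v.length - 1) = a ++ w.dropLast := by
        rw [← List.dropLast_eq_take, ← ha, List.dropLast_append_of_ne_nil hne]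
      rw [this]
      exact ⟨a, [], by simp⟩
    exact hpref _ hinf ⟨ℓ, hdne, u, x.dropLast, hu, (x.dropLast_prefix).trans hx,
      hwd, by rw [List.length_dropLast, hu]; exact hle'⟩
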